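/- Indexing categories are closed under Cartesian products of morphisms: if O is an indexing category for G and fᵢ : Sᵢ → Tᵢ (i = 1, 2) are in O, then f₁ × f₂ : S₁ × S₂ → T₁ × T₂ is in O. -/

import Mathlib

open CategoryTheory CategoryTheory.Limits

namespace CategoryTheory

variable {C : Type*} [Category C]

lemma IsPullback.of_prod_snd_with_id {A B : C} (f : A ⟶ B) (X : C) [HasBinaryProduct A X]
    [HasBinaryProduct B X] [HasBinaryProduct X A] [HasBinaryProduct X B] :
    IsPullback prod.snd (prod.map (𝟙 X) f) f prod.snd :=
  (IsPullback.of_prod_fst_with_id f X).of_iso (prod.braiding A X) (Iso.refl A)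
    (prod.braiding B X) (Iso.refl B) (by simp [prod.lift_snd]) (by ext <;> simp) (by simp)
    (by simp [prod.lift_snd])

/-- `f × g = (f × 1) ≫ (1 × g)`, and `f × 1`, `1 × g` are base changes of `f`, `g` along
product projections. -/
lemma MorphismProperty.prod_map_mem [HasBinaryProducts C] (P : MorphismProperty C)
    [P.IsStableUnderComposition] [P.IsStableUnderBaseChange]
    {X₁ X₂ Y₁ Y₂ : C} {f : X₁ ⟶ Y₁} {g : X₂ ⟶ Y₂} (hf : P f) (hg : P g) :
    P (prod.map f g) := by
  have hf' : P (prod.map f (𝟙 X₂)) := P.of_isPullback (IsPullback.of_prod_fst_with_id f X₂) hf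
  have hg' : P (prod.map (𝟙 Y₁) g) := P.of_isPullback (IsPullback.of_prod_snd_with_id g Y₁) hg
  simpa using P.comp_mem _ _ hf' hg'

end CategoryTheory

theorem stmt13_general (G : Type) [Group G] (O : MorphismProperty (SingleObj G ⥤ Type))
    (hcomp : O.IsStableUnderComposition)
    (hbc : O.IsStableUnderBaseChange)
    {S₁ S₂ T₁ T₂ : SingleObj G ⥤ Type} (f₁ : S₁ ⟶ T₁) (f₂ : S₂ ⟶ T₂)
    (hf₁ : O f₁) (hf₂ : O f₂) :
    O (prod.map f₁ f₂) :=
  O.prod_map_mem hf₁ hf₂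

/-- Indexing categories are closed under Cartesian products of morphisms:
if `O` is an indexing category for `G` (wide, pullback-stable,
finite-coproduct-complete, composition-closed subcategory of `G`-sets) and
`f₁, f₂` are in `O`, then so is `f₁ × f₂`. -/
theorem stmt13 (G : Type) [Group G] (O : MorphismProperty (SingleObj G ⥤ Type))
    (hwide : ∀ X : SingleObj G ⥤ Type, O (𝟙 X))
    (hcomp : O.IsStableUnderComposition)
    (hbc : O.IsStableUnderBaseChange)
    (hcoprod : ∀ {A B A' B' : SingleObj G ⥤ Type} (f : A ⟶ A') (g : B ⟶ B'),
      O f → O g → O (coprod.map f g))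
    {S₁ S₂ T₁ T₂ : SingleObj G ⥤ Type} (f₁ : S₁ ⟶ T₁) (f₂ : S₂ ⟶ T₂)
    (hf₁ : O f₁) (hf₂ : O f₂) :
    O (prod.map f₁ f₂) :=
  stmt13_general G O hcomp hbc f₁ f₂ hf₁ hf₂
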